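/- arXiv:2311.01923 — 2 statements merged into one kernel-verified Lean document; each statement's English description precedes it below -/
import Mathlib

section
/- If Q is a Hermitian block matrix [[X, Y],[Y*, Z]] with Z invertible, then sign(Q) = sign(X - Y Z⁻¹ Y*) + sign(Z). -/
/-!
Sylvester's law of inertia: if `diag e = B * diag d * Bᴴ` with `B` invertible, then `d` and `e`
have equally many positive entries. The form of `diag d` is positive definite on vectors supported
where `d > 0`, and the form of `diag e` is negative semidefinite on vectors vanishing where `e > 0`.
As `x ↦ Bᴴ x` carries the second form to the first, `v ↦ (Bᴴ)⁻¹ v` restricted to the coordinates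
where `e > 0` is injective on vectors supported where `d > 0`. Applied to `-d, -e` this also
matches the negative entries, so by the spectral theorem the signature of a Hermitian matrix is
invariant under congruence. The factorisation
`[[X, Y], [Yᴴ, Z]] = L * [[X - Y Z⁻¹ Yᴴ, 0], [0, Z]] * Lᴴ` with `L = [[1, Y Z⁻¹], [0, 1]]`
makes `Q` congruent to a block diagonal matrix, whose signature is the sum of those of its blocks.
-/

open Matrix

/-- The signature of a Hermitian matrix: the number of positive eigenvalues
minus the number of negative eigenvalues. -/
noncomputable def matrixSignature {n : Type*} [Fintype n] [DecidableEq n]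
    {M : Matrix n n ℂ} (hM : M.IsHermitian) : ℤ :=
  ((Finset.univ.filter fun i => 0 < hM.eigenvalues i).card : ℤ) -
  ((Finset.univ.filter fun i => hM.eigenvalues i < 0).card : ℤ)

open Finset

section RealSignature

variable {ι : Type*} [Fintype ι]

noncomputable def realSignature (d : ι → ℝ) : ℤ := #{i | 0 < d i} - #{i | d i < 0}

lemma card_filter_sum_elim {α κ : Type*} [Fintype κ] (p : α → Prop) [DecidablePred p]
    (a : ι → α) (b : κ → α) :
    #{i | p (Sum.elim a b i)} = #{i | p (a i)} + #{i | p (b i)} := by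
  rw [card_filter, card_filter, card_filter, Fintype.sum_sum_type]
  rfl

theorem realSignature_sum_elim {κ : Type*} [Fintype κ] (a : ι → ℝ) (b : κ → ℝ) :
    realSignature (Sum.elim a b) = realSignature a + realSignature b := by
  simp only [realSignature, card_filter_sum_elim (fun x : ℝ => 0 < x),
    card_filter_sum_elim (fun x : ℝ => x < 0)]
  push_cast
  ring

variable {E : Type*} [NormedAddCommGroup E]

lemma sum_mul_norm_sq_nonpos {e : ι → ℝ} {x : ι → E} (hx : ∀ i, 0 < e i → x i = 0) :
    ∑ i, e i * ‖x i‖ ^ 2 ≤ 0 := by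
  refine sum_nonpos fun i _ => ?_
  by_cases hi : 0 < e i
  · simp [hx i hi]
  · exact mul_nonpos_of_nonpos_of_nonneg (not_lt.mp hi) (sq_nonneg _)

lemma eq_zero_of_sum_mul_norm_sq_nonpos {d : ι → ℝ} {x : ι → E} (hx : ∀ i, d i ≤ 0 → x i = 0)
    (hsum : ∑ i, d i * ‖x i‖ ^ 2 ≤ 0) : x = 0 := by
  have hterm : ∀ i ∈ univ, 0 ≤ d i * ‖x i‖ ^ 2 := fun i _ => by
    by_cases hi : d i ≤ 0
    · simp [hx i hi]
    · exact mul_nonneg (not_le.mp hi).le (sq_nonneg _)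
  have hzero := (sum_eq_zero_iff_of_nonneg hterm).mp (le_antisymm hsum (sum_nonneg hterm))
  funext i
  by_cases hi : d i ≤ 0
  · exact hx i hi
  · simpa [(not_le.mp hi).ne'] using hzero i (mem_univ i)

end RealSignature

namespace Matrix

lemma star_dotProduct_mul_mul_conjTranspose_mulVec {R ι : Type*} [CommSemiring R] [StarRing R]
    [Fintype ι] (B M : Matrix ι ι R) (x : ι → R) :
    star x ⬝ᵥ (B * M * Bᴴ) *ᵥ x = star (Bᴴ *ᵥ x) ⬝ᵥ M *ᵥ (Bᴴ *ᵥ x) := by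
  simp only [star_mulVec, dotProduct_mulVec, vecMul_vecMul, conjTranspose_conjTranspose,
    Matrix.mul_assoc]

theorem fromBlocks_eq_mul_fromBlocks_schur_mul_conjTranspose {R m n : Type*} [CommRing R]
    [StarRing R] [Fintype m] [Fintype n] [DecidableEq m] [DecidableEq n]
    (X : Matrix m m R) (Y : Matrix m n R) {Z : Matrix n n R} (hZ : Z.IsHermitian)
    (hZdet : IsUnit Z.det) :
    fromBlocks X Y Yᴴ Z = fromBlocks 1 (Y * Z⁻¹) 0 1 * fromBlocks (X - Y * Z⁻¹ * Yᴴ) 0 0 Z *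
      (fromBlocks 1 (Y * Z⁻¹) 0 1)ᴴ := by
  have := Z.invertibleOfIsUnitDet hZdet
  rw [fromBlocks_eq_of_invertible₂₂, invOf_eq_nonsing_inv, fromBlocks_conjTranspose,
    conjTranspose_mul, conjTranspose_nonsing_inv, hZ.eq]
  simp

variable {𝕜 ι : Type*} [RCLike 𝕜] [Fintype ι] [DecidableEq ι]

lemma star_dotProduct_diagonal_ofReal_mulVec (d : ι → ℝ) (x : ι → 𝕜) :
    star x ⬝ᵥ diagonal (RCLike.ofReal ∘ d) *ᵥ x = ((∑ i, d i * ‖x i‖ ^ 2 : ℝ) : 𝕜) := by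
  simp only [dotProduct, mulVec_diagonal, Pi.star_apply, Function.comp_apply, RCLike.ofReal_sum,
    RCLike.ofReal_mul, RCLike.ofReal_pow, ← RCLike.mul_conj]
  refine sum_congr rfl fun i _ => ?_
  rw [RCLike.star_def]
  ring

theorem card_pos_le_of_diagonal_eq_mul_mul {d e : ι → ℝ} {B : Matrix ι ι 𝕜} (hB : IsUnit B.det)
    (h : diagonal (RCLike.ofReal ∘ e) = B * diagonal (RCLike.ofReal ∘ d) * Bᴴ) :
    #{i | 0 < d i} ≤ #{i | 0 < e i} := by
  have hBH : IsUnit Bᴴ.det := by rwa [det_conjTranspose, isUnit_star]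
  let T : ({i // 0 < d i} → 𝕜) →ₗ[𝕜] ({i // 0 < e i} → 𝕜) :=
    LinearMap.funLeft 𝕜 𝕜 Subtype.val ∘ₗ mulVecLin (Bᴴ)⁻¹ ∘ₗ
      Function.ExtendByZero.linearMap 𝕜 Subtype.val
  have hT : Function.Injective T := by
    rw [← LinearMap.ker_eq_bot, LinearMap.ker_eq_bot']
    intro v hv
    set w : ι → 𝕜 := Function.extend Subtype.val v 0
    set x := (Bᴴ)⁻¹ *ᵥ w
    have hBx : Bᴴ *ᵥ x = w := by rw [mulVec_mulVec, mul_nonsing_inv _ hBH, one_mulVec]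
    have hx : ∀ i, 0 < e i → x i = 0 := fun i hi => congrFun hv ⟨i, hi⟩
    have hw : ∀ i, d i ≤ 0 → w i = 0 := fun i hi => by simp [w, not_lt.mpr hi]
    have hform := star_dotProduct_mul_mul_conjTranspose_mulVec B (diagonal (RCLike.ofReal ∘ d)) x
    rw [← h, hBx, star_dotProduct_diagonal_ofReal_mulVec, star_dotProduct_diagonal_ofReal_mulVec,
      RCLike.ofReal_inj] at hform
    have hw0 : w = 0 := eq_zero_of_sum_mul_norm_sq_nonpos hw (hform ▸ sum_mul_norm_sq_nonpos hx)
    funext j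
    simpa [w, Subtype.val_injective.extend_apply] using congrFun hw0 j
  simpa [Module.finrank_fintype_fun_eq_card, Fintype.card_subtype] using
    LinearMap.finrank_le_finrank_of_injective hT

theorem card_pos_eq_of_diagonal_eq_mul_mul {d e : ι → ℝ} {B : Matrix ι ι 𝕜} (hB : IsUnit B.det)
    (h : diagonal (RCLike.ofReal ∘ e) = B * diagonal (RCLike.ofReal ∘ d) * Bᴴ) :
    #{i | 0 < e i} = #{i | 0 < d i} := by
  refine le_antisymm (card_pos_le_of_diagonal_eq_mul_mul (isUnit_nonsing_inv_det B hB) ?_)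
    (card_pos_le_of_diagonal_eq_mul_mul hB h)
  have hBH : IsUnit Bᴴ.det := by rwa [det_conjTranspose, isUnit_star]
  rw [h, conjTranspose_nonsing_inv, ← Matrix.mul_assoc, ← Matrix.mul_assoc, nonsing_inv_mul _ hB,
    Matrix.one_mul, Matrix.mul_assoc, mul_nonsing_inv _ hBH, Matrix.mul_one]

theorem card_neg_eq_of_diagonal_eq_mul_mul {d e : ι → ℝ} {B : Matrix ι ι 𝕜} (hB : IsUnit B.det)
    (h : diagonal (RCLike.ofReal ∘ e) = B * diagonal (RCLike.ofReal ∘ d) * Bᴴ) :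
    #{i | e i < 0} = #{i | d i < 0} := by
  have hneg (f : ι → ℝ) :
      diagonal (RCLike.ofReal ∘ (-f)) = -diagonal (RCLike.ofReal ∘ f : ι → 𝕜) := by
    rw [diagonal_neg]
    congr 1
    ext i
    simp
  have := card_pos_eq_of_diagonal_eq_mul_mul (d := -d) (e := -e) hB
    (by rw [hneg, hneg, h, Matrix.mul_neg, Matrix.neg_mul])
  simpa only [Pi.neg_apply, neg_pos] using this

theorem realSignature_eq_of_diagonal_eq_mul_mul {d e : ι → ℝ} {B : Matrix ι ι 𝕜}
    (hB : IsUnit B.det)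
    (h : diagonal (RCLike.ofReal ∘ e) = B * diagonal (RCLike.ofReal ∘ d) * Bᴴ) :
    realSignature e = realSignature d := by
  rw [realSignature, realSignature, card_pos_eq_of_diagonal_eq_mul_mul hB h,
    card_neg_eq_of_diagonal_eq_mul_mul hB h]

lemma IsHermitian.eq_mul_diagonal_mul_conjTranspose {A : Matrix ι ι 𝕜} (hA : A.IsHermitian) :
    A = (hA.eigenvectorUnitary : Matrix ι ι 𝕜) * diagonal (RCLike.ofReal ∘ hA.eigenvalues) *
      (hA.eigenvectorUnitary : Matrix ι ι 𝕜)ᴴ :=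
  hA.spectral_theorem

lemma IsHermitian.diagonal_eigenvalues_eq_conjTranspose_mul_mul {A : Matrix ι ι 𝕜}
    (hA : A.IsHermitian) :
    diagonal (RCLike.ofReal ∘ hA.eigenvalues) =
      (hA.eigenvectorUnitary : Matrix ι ι 𝕜)ᴴ * A * (hA.eigenvectorUnitary : Matrix ι ι 𝕜) := by
  simp only [← hA.conjStarAlgAut_star_eigenvectorUnitary, Unitary.conjStarAlgAut_apply,
    Unitary.coe_star, star_eq_conjTranspose, conjTranspose_conjTranspose]

theorem IsHermitian.realSignature_eigenvalues_eq_of_eq_mul_diagonal_mul {A : Matrix ι ι 𝕜}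
    (hA : A.IsHermitian) {C : Matrix ι ι 𝕜} (hC : IsUnit C.det) {d : ι → ℝ}
    (h : A = C * diagonal (RCLike.ofReal ∘ d) * Cᴴ) :
    realSignature hA.eigenvalues = realSignature d := by
  refine realSignature_eq_of_diagonal_eq_mul_mul
    (B := (hA.eigenvectorUnitary : Matrix ι ι 𝕜)ᴴ * C) ?_ ?_
  · rw [det_mul]
    exact (UnitaryGroup.det_isUnit (star hA.eigenvectorUnitary)).mul hC
  · rw [hA.diagonal_eigenvalues_eq_conjTranspose_mul_mul, conjTranspose_mul,
      conjTranspose_conjTranspose]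
    subst h
    simp only [Matrix.mul_assoc]

end Matrix

section MatrixSignature

variable {ι : Type*} [Fintype ι] [DecidableEq ι]

lemma matrixSignature_eq_realSignature {M : Matrix ι ι ℂ} (hM : M.IsHermitian) :
    matrixSignature hM = realSignature hM.eigenvalues :=
  rfl

theorem matrixSignature_eq_of_eq_mul_mul_conjTranspose {M N : Matrix ι ι ℂ} (hM : M.IsHermitian)
    (hN : N.IsHermitian) {C : Matrix ι ι ℂ} (hC : IsUnit C.det) (h : N = C * M * Cᴴ) :
    matrixSignature hN = matrixSignature hM := by
  rw [matrixSignature_eq_realSignature, matrixSignature_eq_realSignature]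
  refine hN.realSignature_eigenvalues_eq_of_eq_mul_diagonal_mul
    (C := C * hM.eigenvectorUnitary) ?_ ?_
  · rw [det_mul]
    exact hC.mul (UnitaryGroup.det_isUnit _)
  · calc N = C * M * Cᴴ := h
      _ = C * ((hM.eigenvectorUnitary : Matrix ι ι ℂ) * diagonal (RCLike.ofReal ∘ hM.eigenvalues) *
          (hM.eigenvectorUnitary : Matrix ι ι ℂ)ᴴ) * Cᴴ := by
        rw [← hM.eq_mul_diagonal_mul_conjTranspose]
      _ = _ := by simp only [conjTranspose_mul, Matrix.mul_assoc]

theorem matrixSignature_fromBlocks_zero {m n : Type*} [Fintype m] [Fintype n] [DecidableEq m]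
    [DecidableEq n] {A : Matrix m m ℂ} {D : Matrix n n ℂ} (hA : A.IsHermitian)
    (hD : D.IsHermitian) (hAD : (fromBlocks A 0 0 D).IsHermitian) :
    matrixSignature hAD = matrixSignature hA + matrixSignature hD := by
  simp only [matrixSignature_eq_realSignature, ← realSignature_sum_elim]
  refine hAD.realSignature_eigenvalues_eq_of_eq_mul_diagonal_mul
    (C := fromBlocks (hA.eigenvectorUnitary : Matrix m m ℂ) 0 0 hD.eigenvectorUnitary) ?_ ?_
  · rw [det_fromBlocks_zero₂₁]
    exact (UnitaryGroup.det_isUnit _).mul (UnitaryGroup.det_isUnit _)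
  · rw [Sum.comp_elim, ← fromBlocks_diagonal, fromBlocks_conjTranspose, fromBlocks_multiply,
      fromBlocks_multiply]
    simp only [Matrix.mul_zero, Matrix.zero_mul, add_zero, zero_add, conjTranspose_zero,
      ← hA.eq_mul_diagonal_mul_conjTranspose, ← hD.eq_mul_diagonal_mul_conjTranspose]

end MatrixSignature

theorem signature_block_schur
    {m n : Type*} [Fintype m] [Fintype n] [DecidableEq m] [DecidableEq n]
    (X : Matrix m m ℂ) (Y : Matrix m n ℂ) (Z : Matrix n n ℂ)
    (hZdet : IsUnit Z.det)
    (hQ : (Matrix.fromBlocks X Y Yᴴ Z).IsHermitian)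
    (hS : (X - Y * Z⁻¹ * Yᴴ).IsHermitian)
    (hZ : Z.IsHermitian) :
    matrixSignature hQ = matrixSignature hS + matrixSignature hZ := by
  have hL : IsUnit (fromBlocks (1 : Matrix m m ℂ) (Y * Z⁻¹) 0 1).det := by simp
  rw [matrixSignature_eq_of_eq_mul_mul_conjTranspose (hS.fromBlocks conjTranspose_zero hZ) hQ hL
      (fromBlocks_eq_mul_fromBlocks_schur_mul_conjTranspose X Y hZ hZdet),
    matrixSignature_fromBlocks_zero hS hZ]
end

section
/- Consider the 4×4 symmetric matrix T(x) with rows/columns indexed by (a,b,c,d) given by T = [[2x²-1, x, 1, x],[x,1,x,1],[1,x,2x²-1,x],[x,1,x,1]]. If the sequence satisfies a_n + 2x·a_{n+1} + a_{n+2} = 0, then the vector v = (a_{k-1}, a_k, a_{k-1}, a_{k-2}) satisfies T v = 0. -/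
open Matrix

theorem kashaev_vertex_matrix_kernel
    {K : Type*} [CommRing K] (x : K) (a : ℤ → K)
    (h : ∀ n : ℤ, a n + 2 * x * a (n + 1) + a (n + 2) = 0) (k : ℤ) :
    (!![2 * x ^ 2 - 1, x, 1, x;
        x, 1, x, 1;
        1, x, 2 * x ^ 2 - 1, x;
        x, 1, x, 1] : Matrix (Fin 4) (Fin 4) K).mulVec
      ![a (k - 1), a k, a (k - 1), a (k - 2)] = 0 := by
  have h1 := h (k - 2)
  have e1 : k - 2 + 1 = k - 1 := by ring
  have e2 : k - 2 + 2 = k := by ring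
  rw [e1, e2] at h1
  funext i
  fin_cases i <;>
    simp [mulVec, dotProduct, Fin.sum_univ_four] <;>
    first | linear_combination h1 | linear_combination x * h1
end
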